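/- Let p be an odd prime. Every Sylow p-subgroup of the holomorph Hol(ZMod p × DihedralGroup p) has order p^3 and is isomorphic to the elementary abelian group ZMod p × ZMod p × ZMod p. -/

import Mathlib

/-- The holomorph of a group `X`: the normalizer in `Equiv.Perm X` of the image of the
left regular representation of `X`. -/
def Hol (X : Type*) [Group X] : Subgroup (Equiv.Perm X) :=
  Subgroup.normalizer ((MulAction.toPermHom X X).range : Set (Equiv.Perm X))

/-- A subgroup `S` of `Equiv.Perm X` acts regularly on `X`: the action is transitive and
the stabilizer of every point is trivial. -/
def IsRegularSubgroup {X : Type*} (S : Subgroup (Equiv.Perm X)) : Prop :=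
  (∀ x y : X, ∃ s ∈ S, s x = y) ∧ ∀ s ∈ S, ∀ x : X, s x = x → s = 1

/-!
The translations `x ↦ (a, r b) * x * (1, r c)` of `X = C_p × D_p` lie in `Hol X` and form a copy
of `(ZMod p)³`; for odd `p` no nontrivial one of them is the identity. Conversely, a `p`-subgroup
`Q` of `Hol X` has order at most `p³`: the orbit of `1` is a `p`-power of size at most
`|X| = 2p² < p³`, so at most `p²`, and the stabiliser of `1` consists of automorphisms of
`p`-power order. Such an automorphism fixes pointwise the centre `C_p` and the rotation subgroup,
since they are invariant subgroups of order `p` and `Aut(C_p)` has order `p - 1`; it is then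
determined by the image of the reflection `(1, sr 0)`, which is again a reflection, so the
stabiliser has at most `p` elements. Hence the copy of `(ZMod p)³` is a Sylow `p`-subgroup, and
all Sylow `p`-subgroups are isomorphic to it.
-/

open DihedralGroup Subgroup

section Holomorph

variable {X : Type*} [Group X]

theorem mulLeft_mem_hol (g : X) : Equiv.mulLeft g ∈ Hol X :=
  Subgroup.le_normalizer ⟨g, rfl⟩

theorem mulRight_mem_hol (g : X) : Equiv.mulRight g ∈ Hol X := by
  refine Subgroup.centralizer_le_normalizer _ (Subgroup.mem_centralizer_iff.mpr ?_)
  rintro _ ⟨x, rfl⟩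
  ext y
  simp [mul_assoc]

theorem map_mul_of_mem_hol {f : Equiv.Perm X} (hf : f ∈ Hol X) (h1 : f 1 = 1) (x y : X) :
    f (x * y) = f x * f y := by
  obtain ⟨z, hz⟩ := (Subgroup.mem_normalizer_iff.mp hf _).mp ⟨x, rfl⟩
  have hz_apply (w : X) : z * w = f (x * f⁻¹ w) := by
    simpa using DFunLike.congr_fun hz w
  have hz_eq : z = f x := by simpa [h1, Equiv.Perm.inv_eq_iff_eq.mpr h1.symm] using hz_apply 1
  simpa [hz_eq] using (hz_apply (f y)).symm

def twoSidedMul {M : Type*} [CommGroup M] (g h : M →* X) : M →* Equiv.Perm X where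
  toFun v := Equiv.mulRight (h v) * Equiv.mulLeft (g v)
  map_one' := by ext; simp
  map_mul' v w := by
    ext
    simp [mul_assoc, show h (v * w) = h w * h v by rw [mul_comm, map_mul]]

theorem twoSidedMul_apply {M : Type*} [CommGroup M] (g h : M →* X) (v : M) (x : X) :
    twoSidedMul g h v x = g v * x * h v := rfl

theorem twoSidedMul_mem_hol {M : Type*} [CommGroup M] (g h : M →* X) (v : M) :
    twoSidedMul g h v ∈ Hol X :=
  mul_mem (mulRight_mem_hol _) (mulLeft_mem_hol _)

end Holomorph

section PrimeOrder

variable {G : Type*} [Group G] {p k : ℕ} [Fact p.Prime]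

theorem MonoidHom.apply_eq_self_of_mem_zpowers (f : G →* G) {x : G} (hx : orderOf x = p)
    (hfx : f x ∈ Subgroup.zpowers x) (hf : f^[p ^ k] x = x) : f x = x := by
  subst hx
  obtain ⟨m, hm⟩ := Subgroup.mem_zpowers_iff.mp hfx
  have hiter (n : ℕ) : f^[n] x = x ^ (m ^ n) := by
    induction n with
    | zero => simp
    | succ n ih => rw [Function.iterate_succ_apply', ih, map_zpow, ← hm, ← zpow_mul, pow_succ']
  have hpow : m ^ orderOf x ^ k ≡ 1 [ZMOD orderOf x] := by
    rw [← zpow_eq_zpow_iff_modEq, ← hiter, hf, zpow_one]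
  -- Fermat: `m ^ p ^ k ≡ m [ZMOD p]`
  have hm_one : m ≡ 1 [ZMOD orderOf x] := by
    rwa [← ZMod.intCast_eq_intCast_iff, Int.cast_pow, ZMod.pow_card_pow,
      ZMod.intCast_eq_intCast_iff] at hpow
  rw [← hm, ← zpow_one x, ← zpow_mul, one_mul, zpow_eq_zpow_iff_modEq]
  exact hm_one

theorem MonoidHom.apply_eq_self_of_card_eq_prime (f : G →* G) (hf : ∀ x, f^[p ^ k] x = x)
    {H : Subgroup G} (hH : Nat.card H = p) (hfH : ∀ x ∈ H, f x ∈ H) {x : G} (hx : x ∈ H) :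
    f x = x := by
  have : Finite H := Nat.finite_of_card_ne_zero (hH ▸ (Fact.out : p.Prime).ne_zero)
  obtain rfl | hx1 := eq_or_ne x 1
  · exact map_one f
  have hord : orderOf x = p :=
    ((Fact.out : p.Prime).eq_one_or_self_of_dvd _ (hH ▸ H.orderOf_dvd_natCard hx)).resolve_left
      (by simpa using hx1)
  have hzpowers : Subgroup.zpowers x = H :=
    Subgroup.eq_of_le_of_card_ge (Subgroup.zpowers_le.mpr hx)
      (by rw [Nat.card_zpowers, hord, hH])
  exact f.apply_eq_self_of_mem_zpowers hord (hzpowers ▸ hfH x hx) (hf x)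

end PrimeOrder

section CyclicProdDihedral

variable {n : ℕ}

local notation "𝒳" => Multiplicative (ZMod n) × DihedralGroup n

theorem eq_sr_of_mul_self_eq_one (hodd : Odd n) {x : 𝒳} (hx : x * x = 1) (hx1 : x ≠ 1) :
    ∃ j, x = (1, sr j) := by
  have hc : x.1 = 1 := by
    have := congrArg (Multiplicative.toAdd ∘ Prod.fst) hx
    simpa [ZMod.add_self_eq_zero_iff_eq_zero hodd] using this
  obtain ⟨c, i | i⟩ := x
  · simp only [Prod.mk_mul_mk, r_mul_r, Prod.mk_eq_one, one_def, r.injEq,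
      ZMod.add_self_eq_zero_iff_eq_zero hodd] at hx
    subst hc
    obtain rfl := hx.2
    exact absurd rfl hx1
  · exact ⟨i, by rw [← hc]⟩

def rotationSubgroup : Subgroup 𝒳 := zpowers (1, r 1)

theorem mem_rotationSubgroup_iff {x : 𝒳} : x ∈ rotationSubgroup ↔ ∃ i, x = (1, r i) := by
  simp only [rotationSubgroup, mem_zpowers_iff, Prod.pow_mk, one_zpow, r_one_zpow]
  constructor
  · rintro ⟨k, rfl⟩
    exact ⟨k, rfl⟩
  · rintro ⟨i, rfl⟩
    exact ⟨i.cast, by rw [ZMod.intCast_zmod_cast]⟩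

theorem card_rotationSubgroup : Nat.card (rotationSubgroup (n := n)) = n := by
  rw [rotationSubgroup, Nat.card_zpowers, Prod.orderOf_mk, orderOf_one, orderOf_r_one,
    Nat.lcm_one_left]

theorem center_cyclic_prod_dihedral (hodd : Odd n) (hn1 : n ≠ 1) :
    center 𝒳 = (⊤ : Subgroup (Multiplicative (ZMod n))).prod ⊥ := by
  rw [Subgroup.center_prod, center_eq_bot_of_odd_ne_one hodd hn1, CommGroup.center_eq_top]

theorem exists_map_sr_eq_sr (hodd : Odd n) (f : 𝒳 →* 𝒳) (hf : Function.Injective f)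
    (j : ZMod n) : ∃ t, f (1, sr j) = (1, sr t) :=
  eq_sr_of_mul_self_eq_one hodd
    (by rw [← map_mul, Prod.mk_mul_mk, sr_mul_self, mul_one]; exact map_one f)
    (by rw [Ne, map_eq_one_iff f hf]; exact fun h ↦ nomatch congrArg Prod.snd h)

theorem map_mem_rotationSubgroup (hodd : Odd n) (f : 𝒳 →* 𝒳) (hf : Function.Injective f)
    {x : 𝒳} (hx : x ∈ rotationSubgroup) : f x ∈ rotationSubgroup := by
  obtain ⟨i, rfl⟩ := mem_rotationSubgroup_iff.mp hx
  obtain ⟨a, ha⟩ := exists_map_sr_eq_sr hodd f hf 0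
  obtain ⟨b, hb⟩ := exists_map_sr_eq_sr hodd f hf i
  have hprod : ((1 : Multiplicative (ZMod n)), r i) = (1, sr 0) * (1, sr i) := by
    simp [sr_mul_sr]
  rw [hprod, map_mul, ha, hb, Prod.mk_mul_mk, sr_mul_sr, one_mul]
  exact mem_rotationSubgroup_iff.mpr ⟨_, rfl⟩

def elementaryAbelianToHol : Multiplicative (ZMod n × ZMod n × ZMod n) →* Hol 𝒳 :=
  let g : Multiplicative (ZMod n × ZMod n × ZMod n) →* 𝒳 :=
    { toFun v := (.ofAdd v.toAdd.1, r v.toAdd.2.1), map_one' := rfl, map_mul' _ _ := rfl }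
  let h : Multiplicative (ZMod n × ZMod n × ZMod n) →* 𝒳 :=
    { toFun v := (1, r v.toAdd.2.2), map_one' := rfl
      map_mul' _ _ := by rw [Prod.mk_mul_mk, one_mul, r_mul_r]; rfl }
  (twoSidedMul g h).codRestrict _ (twoSidedMul_mem_hol g h)

theorem elementaryAbelianToHol_apply (v : Multiplicative (ZMod n × ZMod n × ZMod n)) (x : 𝒳) :
    (elementaryAbelianToHol (n := n) v : Equiv.Perm 𝒳) x =
      (.ofAdd v.toAdd.1, r v.toAdd.2.1) * x * (1, r v.toAdd.2.2) :=
  rfl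

theorem elementaryAbelianToHol_injective (hodd : Odd n) :
    Function.Injective (elementaryAbelianToHol (n := n)) := by
  rw [injective_iff_map_eq_one]
  intro v hv
  have hfix (x : 𝒳) : (elementaryAbelianToHol (n := n) v : Equiv.Perm 𝒳) x = x := by
    rw [hv]; rfl
  have h1 := hfix 1
  have h2 := hfix (1, sr 0)
  simp only [elementaryAbelianToHol_apply, Prod.mk_mul_mk, r_mul_r, r_mul_sr, sr_mul_r, mul_one,
    Prod.ext_iff, Prod.fst_one, Prod.snd_one, one_def, ofAdd_eq_one, r.injEq, sr.injEq] at h1 h2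
  obtain ⟨ha, hbc⟩ := h1
  have hb : v.toAdd.2.1 = 0 :=
    (ZMod.add_self_eq_zero_iff_eq_zero hodd).mp (by linear_combination hbc - h2.2)
  have hc : v.toAdd.2.2 = 0 := by linear_combination hbc - hb
  rw [← toAdd_eq_zero]
  exact Prod.ext ha (Prod.ext hb hc)

end CyclicProdDihedral

section PrimeCyclicProdDihedral

variable {p k : ℕ} [Fact p.Prime]

local notation "𝒳" => Multiplicative (ZMod p) × DihedralGroup p

theorem card_center_cyclic_prod_dihedral (hodd : Odd p) : Nat.card (center 𝒳) = p := by
  rw [center_cyclic_prod_dihedral hodd (Fact.out : p.Prime).ne_one,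
    Nat.card_congr (prodEquiv _ _).toEquiv, Nat.card_prod, card_top, card_bot, mul_one,
    Nat.card_eq_fintype_card, Fintype.card_multiplicative, ZMod.card]

theorem MonoidHom.apply_mk_r_eq_self (hodd : Odd p) (f : 𝒳 →* 𝒳) (hf : Function.Bijective f)
    (hfk : ∀ x, f^[p ^ k] x = x) (c : Multiplicative (ZMod p)) (i : ZMod p) :
    f (c, r i) = (c, r i) := by
  have hcenter : ∀ z ∈ center 𝒳, f z ∈ center 𝒳 := fun z hz ↦ mem_center_iff.mpr fun y ↦ by
    obtain ⟨x, rfl⟩ := hf.2 y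
    rw [← map_mul, ← map_mul, (mem_center_iff.mp hz x)]
  have hc : f (c, 1) = (c, 1) :=
    f.apply_eq_self_of_card_eq_prime hfk (card_center_cyclic_prod_dihedral hodd) hcenter
      (by rw [center_cyclic_prod_dihedral hodd (Fact.out : p.Prime).ne_one]
          exact ⟨mem_top c, one_mem _⟩)
  have hi : f (1, r i) = (1, r i) :=
    f.apply_eq_self_of_card_eq_prime hfk card_rotationSubgroup
      (fun _ ↦ map_mem_rotationSubgroup hodd f hf.1) (mem_rotationSubgroup_iff.mpr ⟨i, rfl⟩)
  have hprod : ((c, r i) : 𝒳) = (c, 1) * (1, r i) := by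
    rw [Prod.mk_mul_mk, mul_one, one_mul]
  rw [hprod, map_mul, hc, hi]

theorem apply_mk_r_eq_self_of_mem_hol (hodd : Odd p) {σ : Equiv.Perm 𝒳} (hσ : σ ∈ Hol 𝒳)
    (h1 : σ 1 = 1) (hk : σ ^ p ^ k = 1) (c : Multiplicative (ZMod p)) (i : ZMod p) :
    σ (c, r i) = (c, r i) :=
  (MonoidHom.mk' σ (map_mul_of_mem_hol hσ h1)).apply_mk_r_eq_self hodd σ.bijective
    (fun x ↦ by rw [MonoidHom.mk'_apply, ← Equiv.Perm.coe_pow, hk, Equiv.Perm.one_apply]) c i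

theorem apply_mk_sr_of_mem_hol (hodd : Odd p) {σ : Equiv.Perm 𝒳} (hσ : σ ∈ Hol 𝒳)
    (h1 : σ 1 = 1) (hk : σ ^ p ^ k = 1) (c : Multiplicative (ZMod p)) (i : ZMod p) :
    σ (c, sr i) = (c, r (-i)) * σ (1, sr 0) := by
  have hprod : ((c, sr i) : 𝒳) = (c, r (-i)) * (1, sr 0) := by
    rw [Prod.mk_mul_mk, r_mul_sr, mul_one, zero_sub, neg_neg]
  rw [hprod, map_mul_of_mem_hol hσ h1, apply_mk_r_eq_self_of_mem_hol hodd hσ h1 hk]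

theorem card_stabilizer_one_le (hodd : Odd p) (Q : Subgroup (Hol 𝒳)) (hQ : IsPGroup p Q) :
    Nat.card (MulAction.stabilizer Q (1 : 𝒳)) ≤ p := by
  let σ (q : MulAction.stabilizer Q (1 : 𝒳)) : Equiv.Perm 𝒳 := ((q : Q) : Hol 𝒳)
  have hσ (q) : σ q ∈ Hol 𝒳 := ((q : Q) : Hol 𝒳).2
  have hσ1 (q) : σ q 1 = 1 := q.2
  have hσ_pow (q) : ∃ k, σ q ^ p ^ k = 1 := by
    obtain ⟨k, hk⟩ := hQ q
    exact ⟨k, by simp [σ, ← Subgroup.coe_pow, hk]⟩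
  have hσ_sr (q) : σ q (1, sr 0) ∈ Set.range fun t ↦ ((1 : Multiplicative (ZMod p)), sr t) := by
    obtain ⟨t, ht⟩ := exists_map_sr_eq_sr hodd
      (MonoidHom.mk' _ (map_mul_of_mem_hol (hσ q) (hσ1 q))) (σ q).injective 0
    exact ⟨t, ht.symm⟩
  have hσ_inj : Function.Injective fun q ↦ (⟨σ q (1, sr 0), hσ_sr q⟩ : Set.range _) := by
    intro q q' h
    replace h : σ q (1, sr 0) = σ q' (1, sr 0) := congrArg Subtype.val h
    obtain ⟨k, hk⟩ := hσ_pow q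
    obtain ⟨k', hk'⟩ := hσ_pow q'
    have hqq' : σ q = σ q' := by
      ext1 ⟨c, i | i⟩
      · rw [apply_mk_r_eq_self_of_mem_hol hodd (hσ q) (hσ1 q) hk,
          apply_mk_r_eq_self_of_mem_hol hodd (hσ q') (hσ1 q') hk']
      · rw [apply_mk_sr_of_mem_hol hodd (hσ q) (hσ1 q) hk,
          apply_mk_sr_of_mem_hol hodd (hσ q') (hσ1 q') hk', h]
    exact Subtype.ext (Subtype.ext (Subtype.ext hqq'))
  calc Nat.card (MulAction.stabilizer Q (1 : 𝒳))
      ≤ Nat.card (Set.range fun t ↦ ((1 : Multiplicative (ZMod p)), (sr t : DihedralGroup p))) :=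
        Nat.card_le_card_of_injective _ hσ_inj
    _ ≤ Nat.card (ZMod p) := Finite.card_range_le _
    _ = p := Nat.card_zmod p

theorem card_orbit_one_le (hodd : Odd p) (Q : Subgroup (Hol 𝒳)) (hQ : IsPGroup p Q) :
    Nat.card (MulAction.orbit Q (1 : 𝒳)) ≤ p ^ 2 := by
  obtain ⟨m, hm⟩ := hQ.card_orbit (1 : 𝒳)
  have hlt : p ^ m < p ^ 3 := by
    have h3 : 3 ≤ p := by
      obtain ⟨j, rfl⟩ := hodd
      have := (Fact.out : (2 * j + 1).Prime).two_le
      omega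
    calc p ^ m ≤ Nat.card 𝒳 := hm ▸ Finite.card_subtype_le _
      _ = 2 * p ^ 2 := by
        rw [Nat.card_prod, Nat.card_eq_fintype_card (α := Multiplicative _),
          Fintype.card_multiplicative, ZMod.card, DihedralGroup.nat_card]
        ring
      _ < p ^ 3 := by rw [pow_succ' p 2]; gcongr; omega
  rw [hm]
  exact Nat.pow_le_pow_right (Fact.out : p.Prime).pos
    (Nat.lt_succ_iff.mp ((Nat.pow_lt_pow_iff_right (Fact.out : p.Prime).one_lt).mp hlt))

theorem card_le_of_isPGroup (hodd : Odd p) (Q : Subgroup (Hol 𝒳)) (hQ : IsPGroup p Q) :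
    Nat.card Q ≤ p ^ 3 := by
  rw [← card_mul_index (MulAction.stabilizer Q (1 : 𝒳)), MulAction.index_stabilizer,
    ← Nat.card_coe_set_eq]
  calc _ ≤ p * p ^ 2 :=
        Nat.mul_le_mul (card_stabilizer_one_le hodd Q hQ) (card_orbit_one_le hodd Q hQ)
    _ = p ^ 3 := by ring

end PrimeCyclicProdDihedral

/-- Every Sylow `p`-subgroup of `Hol(ZMod p × DihedralGroup p)` (`p` an odd prime) has
order `p ^ 3` and is elementary abelian, i.e. isomorphic to `C_p × C_p × C_p`. -/
theorem sylow_hol_cyclic_prod_dihedral (p : ℕ) (hp : p.Prime) (hodd : Odd p)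
    (P : Sylow p ↥(Hol (Multiplicative (ZMod p) × DihedralGroup p))) :
    Nat.card ↥P.toSubgroup = p ^ 3 ∧
    Nonempty (↥P.toSubgroup ≃* Multiplicative (ZMod p × ZMod p × ZMod p)) := by
  have : Fact p.Prime := ⟨hp⟩
  let E := MonoidHom.ofInjective (elementaryAbelianToHol_injective (n := p) hodd)
  have hcard : Nat.card (Multiplicative (ZMod p × ZMod p × ZMod p)) = p ^ 3 := by
    rw [Nat.card_eq_fintype_card, Fintype.card_multiplicative, Fintype.card_prod,
      Fintype.card_prod, ZMod.card]
    ring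
  have hE : Nat.card (elementaryAbelianToHol (n := p)).range = p ^ 3 :=
    (Nat.card_congr E.toEquiv).symm.trans hcard
  obtain ⟨Q, hQ⟩ := (IsPGroup.of_card hE).exists_le_sylow
  have hEQ : (elementaryAbelianToHol (n := p)).range = Q :=
    eq_of_le_of_card_ge hQ (hE ▸ card_le_of_isPGroup hodd Q Q.isPGroup')
  let e : P ≃* Multiplicative (ZMod p × ZMod p × ZMod p) :=
    (P.equiv Q).trans ((MulEquiv.subgroupCongr hEQ.symm).trans E.symm)
  exact ⟨(Nat.card_congr e.toEquiv).trans hcard, ⟨e⟩⟩
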